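/- arXiv:2405.20368 — 2 statements merged into one kernel-verified Lean document; each statement's English description precedes it below -/
import Mathlib

section
/- The pair (1 − 1/q, 1/(q−1)²) is not in the constant regime; that is, sup_{d≥0} limsup_{n→∞} f_{1−1/q, 1/(q−1)², d}(n) = ∞. -/
open scoped Classical

/-- The normalized second eigenvalue of a `d`-regular graph `G`, defined via the
Courant–Fischer characterization (the supremum of Rayleigh quotients over nonzero
vectors orthogonal to the all-ones vector).  By convention, a `0`-regular
(empty) graph has normalized second eigenvalue `1`. -/
noncomputable def normSecondEig {V : Type*} [Fintype V] (d : ℕ) (G : SimpleGraph V) : ℝ :=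
  if d = 0 then 1
  else sSup {r : ℝ | ∃ x : V → ℝ, x ≠ 0 ∧ (∑ i, x i) = 0 ∧
    r = (∑ i, ∑ j, (if G.Adj i j then (d : ℝ)⁻¹ else 0) * x i * x j) / ∑ i, (x i) ^ 2}

/-- `X` is a proper `q`-coloring of `G`. -/
def IsProperColoring {V : Type*} {q : ℕ} (G : SimpleGraph V) (X : V → Fin q) : Prop :=
  ∀ ⦃u v : V⦄, G.Adj u v → X u ≠ X v

/-- The distance between two `q`-colorings: the minimum Hamming distance between
`X` and `σ ∘ Y` over all permutations `σ` of the colors. -/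
noncomputable def colDist {V : Type*} [Fintype V] {q : ℕ} (X Y : V → Fin q) : ℕ :=
  ⨅ σ : Equiv.Perm (Fin q), hammingDist X (σ ∘ Y)

/-- `C` is a `δ`-distinct set of proper `q`-colorings of `G`: every member is a proper
coloring and every pair of distinct members has distance at least `δ * |V|`. -/
def IsDistinctSet {V : Type*} [Fintype V] {q : ℕ} (G : SimpleGraph V) (δ : ℝ)
    (C : Finset (V → Fin q)) : Prop :=
  (∀ X ∈ C, IsProperColoring G X) ∧
  ∀ X ∈ C, ∀ Y ∈ C, X ≠ Y → δ * (Fintype.card V : ℝ) ≤ (colDist X Y : ℝ)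

/-- `f_{δ,λ,d}(n)`: the maximum size of a `δ`-distinct set of proper `q`-colorings of a
`d`-regular graph on at most `n` vertices with normalized second eigenvalue at most `lam`
(`0` if there is no such graph). -/
noncomputable def colorCount (q : ℕ) (δ lam : ℝ) (d n : ℕ) : ℕ :=
  sSup {m : ℕ | ∃ k ≤ n, ∃ G : SimpleGraph (Fin k),
    G.IsRegularOfDegree d ∧ normSecondEig d G ≤ lam ∧
    ∃ C : Finset (Fin k → Fin q), IsDistinctSet G δ C ∧ C.card = m}

/-- `(δ, lam)` is in the exponential regime. -/
noncomputable def ExponentialRegime (q : ℕ) (δ lam : ℝ) : Prop :=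
  0 < ⨆ d : ℕ, Filter.limsup (fun n : ℕ => Real.log (colorCount q δ lam d n) / n) Filter.atTop

/-- `(δ, lam)` is in the constant regime. -/
noncomputable def ConstantRegime (q : ℕ) (δ lam : ℝ) : Prop :=
  (⨆ d : ℕ, Filter.limsup (fun n : ℕ => (colorCount q δ lam d n : ENNReal)) Filter.atTop) < ⊤

/-- `(δ, lam)` is in the unique regime. -/
noncomputable def UniqueRegime (q : ℕ) (δ lam : ℝ) : Prop :=
  (⨆ d : ℕ, Filter.limsup (fun n : ℕ => (colorCount q δ lam d n : ENNReal)) Filter.atTop) = 1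


/-!
Take the graph `K_q^{⊗t}` on `Fin t → Fin q`, two words adjacent when they differ in every
coordinate. It is `(q-1)^t`-regular, and its adjacency matrix is `(J - I)^{⊗t}`, whose normalised
eigenvalues are the products `(-1/(q-1))^k`, so its second eigenvalue is `1/(q-1)^2`. The `t`
coordinate projections are proper `q`-colourings, and any two of them, even after permuting the
colours of one, agree on exactly a `1/q` fraction of the vertices. Hence every
`f_{1-1/q, 1/(q-1)², (q-1)^t}(n)` with `n ≥ q^t` is at least `t`.
-/

open Finset

section Relabel

variable {V W : Type*} [Fintype V] [Fintype W] {G : SimpleGraph V} {G' : SimpleGraph W}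

theorem hammingDist_comp_equiv {β : Type*} [DecidableEq β] (e : V ≃ W) (x y : W → β) :
    hammingDist (x ∘ e) (y ∘ e) = hammingDist x y :=
  Finset.card_equiv e (by simp)

theorem colDist_comp_equiv {q : ℕ} (e : V ≃ W) (X Y : W → Fin q) :
    colDist (X ∘ e) (Y ∘ e) = colDist X Y :=
  iInf_congr fun σ => hammingDist_comp_equiv e X (σ ∘ Y)

theorem SimpleGraph.IsRegularOfDegree.of_iso {d : ℕ} (φ : G ≃g G') (h : G.IsRegularOfDegree d) :
    G'.IsRegularOfDegree d := by
  intro w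
  rw [← φ.apply_symm_apply w, φ.degree_eq]
  exact h _

theorem normSecondEig_congr (φ : G ≃g G') (d : ℕ) : normSecondEig d G = normSecondEig d G' := by
  have hadj : ∀ a b, G'.Adj (φ.toEquiv a) (φ.toEquiv b) ↔ G.Adj a b := fun _ _ => φ.map_adj_iff
  generalize φ.toEquiv = e at hadj
  unfold normSecondEig
  congr 2
  ext r
  refine (e.arrowCongr (Equiv.refl ℝ)).exists_congr fun x => ?_
  simp [← e.sum_comp, hadj, funext_iff, e.symm.surjective.exists]

theorem IsDistinctSet.of_iso {q : ℕ} {δ : ℝ} (φ : G ≃g G') {C : Finset (V → Fin q)}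
    (hC : IsDistinctSet G δ C) :
    IsDistinctSet G' δ (C.map (φ.toEquiv.arrowCongr (Equiv.refl (Fin q))).toEmbedding) := by
  simp only [IsDistinctSet, Finset.forall_mem_map]
  refine ⟨fun X hX u v huv => hC.1 X hX (φ.symm.map_adj_iff.2 huv), fun X hX Y hY hXY => ?_⟩
  rw [Fintype.card_congr φ.toEquiv.symm]
  convert hC.2 X hX Y hY (fun h => hXY (h ▸ rfl)) using 2
  exact colDist_comp_equiv φ.toEquiv.symm X Y

end Relabel

theorem le_colorCount {q : ℕ} {δ lam : ℝ} {d n : ℕ} {V : Type*} [Fintype V] {G : SimpleGraph V}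
    (hn : Fintype.card V ≤ n) (hreg : G.IsRegularOfDegree d) (heig : normSecondEig d G ≤ lam)
    {C : Finset (V → Fin q)} (hC : IsDistinctSet G δ C) : #C ≤ colorCount q δ lam d n := by
  let φ := SimpleGraph.Iso.map (Fintype.equivFin V) G
  refine le_csSup ⟨(q + 1) ^ n, ?_⟩ ⟨_, hn, _, hreg.of_iso φ, (normSecondEig_congr φ d).symm ▸ heig,
    _, hC.of_iso φ, card_map _⟩
  rintro m ⟨k, hk, -, -, -, C', -, rfl⟩
  -- `q + 1` rather than `q`, because `0 ^ 0 = 1`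
  calc #C' ≤ q ^ k := by simpa using C'.card_le_univ
    _ ≤ (q + 1) ^ k := Nat.pow_le_pow_left q.le_succ k
    _ ≤ (q + 1) ^ n := Nat.pow_le_pow_right q.succ_pos hk

theorem normSecondEig_le {V : Type*} [Fintype V] {G : SimpleGraph V} {d : ℕ} {lam : ℝ}
    (hd : d ≠ 0) (hlam : 0 ≤ lam)
    (h : ∀ x : V → ℝ, ∑ i, x i = 0 →
      ∑ i, ∑ j, (if G.Adj i j then (d : ℝ)⁻¹ else 0) * x i * x j ≤ lam * ∑ i, x i ^ 2) :
    normSecondEig d G ≤ lam := by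
  rw [normSecondEig, if_neg hd]
  refine Real.sSup_le (fun r ⟨x, hx0, hxs, hr⟩ => ?_) hlam
  have hpos : 0 < ∑ i, x i ^ 2 := by
    refine lt_of_le_of_ne (by positivity) fun h0 => hx0 (funext fun i => ?_)
    simpa using (sum_mul_self_eq_zero_iff _ x).1 (by simpa [sq] using h0.symm) i (mem_univ i)
  rw [hr, div_le_iff₀ hpos]
  exact h x hxs

section Coordinates

variable {ι α : Type*} [Fintype ι] [DecidableEq ι] [Fintype α] [DecidableEq α]

theorem card_filter_apply_eq_apply {r s : ι} (hrs : r ≠ s) (g : α → α) :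
    #{u : ι → α | u r = g (u s)} = Fintype.card α ^ (Fintype.card ι - 1) := by
  rw [card_filter, ← (Equiv.funSplitAt r α).symm.sum_comp, Fintype.sum_prod_type_right]
  simp [hrs.symm, Fintype.card_subtype_compl]

theorem hammingDist_eval_comp_eval {r s : ι} (hrs : r ≠ s) (g : α → α) :
    hammingDist (fun u : ι → α => u r) (g ∘ fun u => u s) =
      Fintype.card α ^ Fintype.card ι - Fintype.card α ^ (Fintype.card ι - 1) := by
  rw [hammingDist, ← card_filter_apply_eq_apply hrs g, Finset.filter_not, card_sdiff_of_subset
    (filter_subset _ _), card_univ, Fintype.card_fun]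
  rfl

def completeTensorPow (ι α : Type*) [Nonempty ι] : SimpleGraph (ι → α) where
  Adj u v := ∀ i, u i ≠ v i
  symm := ⟨fun _ _ h i => (h i).symm⟩
  loopless := ⟨fun _ h => h (Classical.arbitrary ι) rfl⟩

theorem completeTensorPow_isRegularOfDegree [Nonempty ι] :
    (completeTensorPow ι α).IsRegularOfDegree ((Fintype.card α - 1) ^ Fintype.card ι) := by
  intro u
  have hnbr : (completeTensorPow ι α).neighborFinset u = Fintype.piFinset fun i => {u i}ᶜ := by
    ext v
    rw [SimpleGraph.mem_neighborFinset]
    simp [completeTensorPow, eq_comm]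
  rw [← SimpleGraph.card_neighborFinset_eq_degree, hnbr, Fintype.card_piFinset]
  simp [card_compl]

theorem isDistinctSet_eval {q : ℕ} (hq : 1 ≤ q) [Nonempty ι] :
    IsDistinctSet (completeTensorPow ι (Fin q)) (1 - 1 / q)
      (univ.image fun (i : ι) (u : ι → Fin q) => u i) := by
  simp only [IsDistinctSet, forall_mem_image]
  refine ⟨fun r _ u v huv => huv r, fun r _ s _ hrs => ?_⟩
  have hrs' : r ≠ s := fun h => hrs (h ▸ rfl)
  obtain ⟨k, hk⟩ : ∃ k, Fintype.card ι = k + 1 := Nat.exists_eq_succ_of_ne_zero Fintype.card_ne_zero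
  have hdist : colDist (fun u : ι → Fin q => u r) (fun u => u s) = q ^ (k + 1) - q ^ k := by
    simp [colDist, hammingDist_eval_comp_eval hrs', hk]
  rw [hdist, Fintype.card_fun, hk, Fintype.card_fin,
    Nat.cast_sub (Nat.pow_le_pow_right hq k.le_succ)]
  push_cast
  field_simp
  exact le_of_eq (by ring)

end Coordinates

theorem eval_injective {ι α : Type*} [Nontrivial α] :
    Function.Injective fun (i : ι) (u : ι → α) => u i := by
  intro r s h
  by_contra hrs
  obtain ⟨a, b, hab⟩ := exists_pair_ne α
  have := congrFun h (Function.update (fun _ => b) r a)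
  simp [Function.update_of_ne (Ne.symm hrs)] at this
  exact hab this

section TensorPowForm

variable {q t : ℕ}

/-- The quadratic form of `(J - I)^{⊗t}`, the adjacency matrix of
`completeTensorPow (Fin t) (Fin q)`. Unlike the graph it also makes sense for `t = 0`, where it is
`sqNorm`; the inductions below start there. -/
def tensorPowForm (q t : ℕ) (x : (Fin t → Fin q) → ℝ) : ℝ :=
  ∑ u, ∑ v, if ∀ i, u i ≠ v i then x u * x v else 0

def sqNorm {ι : Type*} [Fintype ι] (x : ι → ℝ) : ℝ :=
  ∑ u, x u ^ 2

def fiberSum (x : (Fin (t + 1) → Fin q) → ℝ) (u : Fin t → Fin q) : ℝ :=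
  ∑ a, x (Fin.cons a u)

noncomputable def fiberDev (x : (Fin (t + 1) → Fin q) → ℝ) (a : Fin q) (u : Fin t → Fin q) : ℝ :=
  x (Fin.cons a u) - fiberSum x u / q

theorem sqNorm_nonneg {ι : Type*} [Fintype ι] (x : ι → ℝ) : 0 ≤ sqNorm x :=
  sum_nonneg fun _ _ => sq_nonneg _

theorem sum_pi_fin_succ {α M : Type*} [Fintype α] [AddCommMonoid M] (f : (Fin (t + 1) → α) → M) :
    ∑ w, f w = ∑ a, ∑ u, f (Fin.cons a u) := by
  rw [← (Fin.consEquiv fun _ => α).sum_comp, Fintype.sum_prod_type]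
  rfl

theorem forall_cons_ne_cons_iff {α : Type*} (a b : α) (u v : Fin t → α) :
    (∀ i, (Fin.cons a u : Fin (t + 1) → α) i ≠ (Fin.cons b v : Fin (t + 1) → α) i) ↔
      a ≠ b ∧ ∀ i, u i ≠ v i := by
  simp [Fin.forall_fin_succ]

theorem sum_mul_eq_sum_sub_mean_mul_sub_mean {ι : Type*} [Fintype ι]
    (hι : (Fintype.card ι : ℝ) ≠ 0) (p r : ι → ℝ) :
    ∑ a, p a * r a =
      ∑ a, (p a - (∑ b, p b) / Fintype.card ι) * (r a - (∑ b, r b) / Fintype.card ι)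
        + (∑ a, p a) * (∑ a, r a) / Fintype.card ι := by
  simp only [sub_mul, mul_sub, sum_sub_distrib, ← sum_mul, ← mul_sum, sum_const, card_univ,
    nsmul_eq_mul]
  field_simp
  ring

theorem sum_sum_ite_ne_mul {ι : Type*} [Fintype ι] [DecidableEq ι] (p r : ι → ℝ) :
    ∑ a, ∑ b, (if a ≠ b then p a * r b else 0) = (∑ a, p a) * (∑ b, r b) - ∑ a, p a * r a := by
  simp only [ite_not, sum_mul_sum, ← sum_sub_distrib]
  refine sum_congr rfl fun a _ => ?_
  rw [sum_ite, filter_eq, sum_const_zero, zero_add, filter_ne, sum_erase_eq_sub (mem_univ a)]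

theorem sum_fiber_mul (hq : (q : ℝ) ≠ 0) (x : (Fin (t + 1) → Fin q) → ℝ) (u v : Fin t → Fin q) :
    ∑ a, x (Fin.cons a u) * x (Fin.cons a v) =
      ∑ a, fiberDev x a u * fiberDev x a v + fiberSum x u * fiberSum x v / q := by
  simpa [fiberDev, fiberSum] using sum_mul_eq_sum_sub_mean_mul_sub_mean (by simpa using hq)
    (fun a => x (Fin.cons a u)) (fun a => x (Fin.cons a v))

theorem sum_fiberSum (x : (Fin (t + 1) → Fin q) → ℝ) : ∑ u, fiberSum x u = ∑ w, x w := by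
  rw [sum_pi_fin_succ, sum_comm]
  rfl

theorem sqNorm_succ (hq : (q : ℝ) ≠ 0) (x : (Fin (t + 1) → Fin q) → ℝ) :
    sqNorm x = sqNorm (fiberSum x) / q + ∑ a, sqNorm (fiberDev x a) := by
  simp only [sqNorm, sq]
  rw [sum_pi_fin_succ, sum_comm, sum_div, sum_comm (γ := Fin q), ← sum_add_distrib]
  refine sum_congr rfl fun u _ => ?_
  rw [sum_fiber_mul hq, add_comm]

theorem tensorPowForm_zero (x : (Fin 0 → Fin q) → ℝ) : tensorPowForm q 0 x = sqNorm x := by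
  simp [tensorPowForm, sqNorm, sq]

/-- On the fibre sums the first factor `J - I` acts as `q - 1`, on the fibre deviations as `-1`. -/
theorem tensorPowForm_succ (hq : (q : ℝ) ≠ 0) (x : (Fin (t + 1) → Fin q) → ℝ) :
    tensorPowForm q (t + 1) x =
      (1 - 1 / q) * tensorPowForm q t (fiberSum x) - ∑ a, tensorPowForm q t (fiberDev x a) := by
  have hfiber : ∀ u v : Fin t → Fin q,
      ∑ a, ∑ b, (if a ≠ b ∧ ∀ i, u i ≠ v i then x (Fin.cons a u) * x (Fin.cons b v) else 0) =
        (1 - 1 / q) * (if ∀ i, u i ≠ v i then fiberSum x u * fiberSum x v else 0)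
          - ∑ a, if ∀ i, u i ≠ v i then fiberDev x a u * fiberDev x a v else 0 := by
    intro u v
    split_ifs with huv
    · simp only [and_iff_left huv, sum_sum_ite_ne_mul, sum_fiber_mul hq]
      simp only [fiberSum]
      ring
    · simp [huv]
  simp only [tensorPowForm, sum_pi_fin_succ, forall_cons_ne_cons_iff]
  rw [sum_comm]
  refine (sum_congr rfl fun u _ => sum_comm_cycle).trans ?_
  simp only [hfiber, sum_sub_distrib, mul_sum]
  rw [sum_comm_cycle]

/-- The spectrum of `(J - I)^{⊗t}` lies in `[-(q-1)^(t-1), (q-1)^t]`; the lower bound is multiplied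
by `q - 1` so that it also covers `t = 0`. -/
theorem tensorPowForm_bounds (hq : 2 ≤ q) (x : (Fin t → Fin q) → ℝ) :
    -((q - 1 : ℝ) ^ t * sqNorm x) ≤ (q - 1) * tensorPowForm q t x ∧
      tensorPowForm q t x ≤ (q - 1) ^ t * sqNorm x := by
  have hq' : (2 : ℝ) ≤ q := by exact_mod_cast hq
  induction t with
  | zero =>
    rw [tensorPowForm_zero, pow_zero, one_mul]
    exact ⟨by nlinarith [sqNorm_nonneg x], le_rfl⟩
  | succ t ih =>
    set c : ℝ := q - 1 with hc
    have hc1 : 1 ≤ c := by linarith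
    have hcq : 1 - 1 / (q : ℝ) = c / q := by rw [hc]; field_simp
    rw [tensorPowForm_succ (by positivity), sqNorm_succ (by positivity), hcq, pow_succ]
    obtain ⟨hs₁, hs₂⟩ := ih (fiberSum x)
    have hz₁ :
        -(c ^ t * ∑ a, sqNorm (fiberDev x a)) ≤ c * ∑ a, tensorPowForm q t (fiberDev x a) := by
      simpa only [mul_sum, ← sum_neg_distrib] using sum_le_sum fun a _ => (ih (fiberDev x a)).1
    have hz₂ : ∑ a, tensorPowForm q t (fiberDev x a) ≤ c ^ t * ∑ a, sqNorm (fiberDev x a) := by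
      simpa only [mul_sum] using sum_le_sum fun a _ => (ih (fiberDev x a)).2
    have hNz : 0 ≤ ∑ a, sqNorm (fiberDev x a) := sum_nonneg fun a _ => sqNorm_nonneg _
    constructor
    · linear_combination (c / q) * hs₁ + c * hz₂
    · have hz₃ : -∑ a, tensorPowForm q t (fiberDev x a) ≤ c ^ t * ∑ a, sqNorm (fiberDev x a) :=
        le_of_mul_le_of_one_le (by linarith) (by positivity) hc1
      linear_combination (c / q) * hs₂ + hz₃ + (c ^ t * ∑ a, sqNorm (fiberDev x a)) * hc1

theorem tensorPowForm_le_of_sum_eq_zero (hq : 2 ≤ q) (x : (Fin t → Fin q) → ℝ)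
    (hx : ∑ u, x u = 0) :
    (q - 1 : ℝ) ^ 2 * tensorPowForm q t x ≤ (q - 1) ^ t * sqNorm x := by
  have hq' : (2 : ℝ) ≤ q := by exact_mod_cast hq
  induction t with
  | zero =>
    have hx0 : x default = 0 := by simpa using hx
    simp [tensorPowForm_zero, sqNorm, hx0]
  | succ t ih =>
    set c : ℝ := q - 1 with hc
    have hcq : 1 - 1 / (q : ℝ) = c / q := by rw [hc]; field_simp
    rw [tensorPowForm_succ (by positivity), sqNorm_succ (by positivity), hcq, pow_succ]
    have hs := ih (fiberSum x) (by rw [sum_fiberSum, hx])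
    have hz :
        -(c ^ t * ∑ a, sqNorm (fiberDev x a)) ≤ c * ∑ a, tensorPowForm q t (fiberDev x a) := by
      simpa only [mul_sum, ← sum_neg_distrib] using
        sum_le_sum fun a _ => (tensorPowForm_bounds hq (fiberDev x a)).1
    have hc0 : 0 ≤ c := by linarith
    linear_combination (c / q) * hs + c * hz

end TensorPowForm

theorem normSecondEig_completeTensorPow_le {q t : ℕ} [NeZero t] (hq : 2 ≤ q) :
    normSecondEig ((q - 1) ^ t) (completeTensorPow (Fin t) (Fin q)) ≤ 1 / ((q : ℝ) - 1) ^ 2 := by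
  have hq' : (2 : ℝ) ≤ q := by exact_mod_cast hq
  have hd : (((q - 1) ^ t : ℕ) : ℝ) = ((q : ℝ) - 1) ^ t := by
    push_cast [Nat.cast_sub (by omega : 1 ≤ q)]
    ring
  refine normSecondEig_le (pow_ne_zero _ (by omega)) (by positivity) fun x hx => ?_
  have hnum : ∑ i, ∑ j, (if (completeTensorPow (Fin t) (Fin q)).Adj i j
      then (((q - 1) ^ t : ℕ) : ℝ)⁻¹ else 0) * x i * x j =
        (((q - 1) ^ t : ℕ) : ℝ)⁻¹ * tensorPowForm q t x := by
    simp only [tensorPowForm, mul_sum]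
    refine sum_congr rfl fun u _ => sum_congr rfl fun v _ => ?_
    split_ifs <;> simp_all [completeTensorPow, mul_assoc]
  have hform := tensorPowForm_le_of_sum_eq_zero hq x hx
  rw [hnum, hd]
  have hc : (0 : ℝ) < q - 1 := by linarith
  rw [inv_mul_le_iff₀ (pow_pos hc t), one_div_mul_eq_div, mul_div_assoc',
    le_div_iff₀ (pow_pos hc 2), mul_comm]
  exact hform

theorem le_colorCount_completeTensorPow {q t n : ℕ} [NeZero t] (hq : 2 ≤ q) (hn : q ^ t ≤ n) :
    t ≤ colorCount q (1 - 1 / (q : ℝ)) (1 / ((q : ℝ) - 1) ^ 2) ((q - 1) ^ t) n := by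
  have : Nontrivial (Fin q) := Fin.nontrivial_iff_two_le.2 hq
  have hcount := le_colorCount (by simpa using hn)
    (by simpa using completeTensorPow_isRegularOfDegree (ι := Fin t) (α := Fin q))
    (normSecondEig_completeTensorPow_le hq) (isDistinctSet_eval (by omega))
  rwa [card_image_of_injective _ eval_injective, card_univ, Fintype.card_fin] at hcount

/-- The pair `(1 - 1/q, 1/(q-1)²)` is not in the constant regime:
`sup_{d ≥ 0} limsup_{n → ∞} f_{1-1/q, 1/(q-1)², d}(n) = ∞`. -/
theorem not_constantRegime (q : ℕ) (hq : 3 ≤ q) :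
    (⨆ d : ℕ, Filter.limsup
      (fun n : ℕ => (colorCount q (1 - 1 / (q : ℝ)) (1 / ((q : ℝ) - 1) ^ 2) d n : ENNReal))
      Filter.atTop) = ⊤ := by
  have hlower : ∀ t : ℕ, ((t + 1 : ℕ) : ENNReal) ≤ ⨆ d : ℕ, Filter.limsup
      (fun n : ℕ => (colorCount q (1 - 1 / (q : ℝ)) (1 / ((q : ℝ) - 1) ^ 2) d n : ENNReal))
      Filter.atTop := fun t =>
    le_iSup_of_le ((q - 1) ^ (t + 1)) <| Filter.le_limsup_of_frequently_le' <|
      (Filter.eventually_atTop.2 ⟨q ^ (t + 1), fun n hn =>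
        Nat.cast_le.2 (le_colorCount_completeTensorPow (by omega) hn)⟩).frequently
  by_contra hfin
  obtain ⟨t, ht⟩ := ENNReal.exists_nat_gt hfin
  exact (ht.trans_le ((Nat.cast_le.2 t.le_succ).trans (hlower t))).false
end

section
/- Any pair (δ, λ) ∈ [1 − 1/(q−1), 1 − 1/q] × (0, 1] satisfying (q−1)(1−δ)² + (1 − (q−1)(1−δ))² < 1 − (1 − 1/(q−1))/(1 − λ) is in the unique regime. -/
open scoped Classical

/-!
Let `X ≠ Y` be proper colourings at distance at least `δ n`, put `ε = 1 - δ`, and for a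
permutation `σ` of the colours let `A_σ` be the set of vertices where `σ ∘ Y` agrees with `X`.
The distance bound gives `|A_σ| ≤ ε n`; the sets `A_{σ + t}` for the `q` cyclic shifts of `σ`
partition the vertices, so also `|A_σ| ≥ (1 - (q - 1) ε) n`. The expander mixing lemma bounds
the number of edges inside `A_σ` by roughly `λ |A_σ| + (1 - λ) |A_σ|² / n`, a convex function
of `|A_σ|`, hence by its chord over the interval above. Summing over all `σ`: each vertex lies
in `(q - 1)!` of the sets `A_σ`, and, because `X` and `Y` are proper, each edge lies inside
exactly `(q - 2)!` of them. Comparing the two sides gives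
`1 / (q - 1) ≤ λ + (1 - λ) ((q - 1) ε² + (1 - (q - 1) ε)²)`, which the hypothesis rules out.
So a `δ`-distinct set has at most one colouring, and the graph with no vertices has one.
-/

open Finset Matrix
open scoped Nat

section PermCount

variable {α : Type*} [DecidableEq α]

theorem card_perm_fixing [Fintype α] (s : Finset α) :
    #{σ : Equiv.Perm α | ∀ x ∈ s, σ x = x} = (Fintype.card α - #s)! := by
  rw [← Fintype.card_subtype, ← Fintype.card_coe s, ← Fintype.card_subtype_compl,
    ← Fintype.card_perm]
  refine Fintype.card_congr ((Equiv.Perm.subtypeEquivSubtypePerm (· ∉ s)).trans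
    (Equiv.subtypeEquivRight fun σ => ?_)).symm
  simp

theorem card_perm_eqOn [Fintype α] (s : Finset α) (τ : Equiv.Perm α) :
    #{σ : Equiv.Perm α | ∀ x ∈ s, σ x = τ x} = (Fintype.card α - #s)! := by
  rw [← card_perm_fixing s]
  refine card_equiv (Equiv.mulLeft τ⁻¹) fun σ => ?_
  simp [Equiv.eq_symm_apply, eq_comm]

theorem card_perm_apply_eq [Fintype α] (a b : α) :
    #{σ : Equiv.Perm α | σ a = b} = (Fintype.card α - 1)! := by
  simpa using card_perm_eqOn {a} (Equiv.swap a b)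

theorem exists_perm_apply_eq_and_apply_eq {a₁ a₂ b₁ b₂ : α} (ha : a₁ ≠ a₂) (hb : b₁ ≠ b₂) :
    ∃ τ : Equiv.Perm α, τ a₁ = b₁ ∧ τ a₂ = b₂ := by
  set c := Equiv.swap a₁ b₁ a₂
  have hc : b₁ ≠ c := by
    simpa [c] using (Equiv.swap a₁ b₁).injective.ne ha
  refine ⟨Equiv.swap c b₂ * Equiv.swap a₁ b₁, ?_, ?_⟩
  · simp [Equiv.swap_apply_of_ne_of_ne hc hb]
  · simp [c]

theorem card_perm_apply_eq_and_apply_eq [Fintype α] {a₁ a₂ b₁ b₂ : α} (ha : a₁ ≠ a₂)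
    (hb : b₁ ≠ b₂) :
    #{σ : Equiv.Perm α | σ a₁ = b₁ ∧ σ a₂ = b₂} = (Fintype.card α - 2)! := by
  obtain ⟨τ, h₁, h₂⟩ := exists_perm_apply_eq_and_apply_eq ha hb
  simpa [card_pair ha, h₁, h₂] using card_perm_eqOn {a₁, a₂} τ

end PermCount

section Spectral

variable {V : Type*} [Fintype V] {d : ℕ} {G : SimpleGraph V}

theorem sum_ite_adj_inv_mul_mul_eq_dotProduct (x y : V → ℝ) :
    ∑ i, ∑ j, (if G.Adj i j then (d : ℝ)⁻¹ else 0) * x i * y j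
      = (d : ℝ)⁻¹ * (x ⬝ᵥ G.adjMatrix ℝ *ᵥ y) := by
  simp only [SimpleGraph.dotProduct_mulVec_adjMatrix, mul_sum, ite_mul, zero_mul, mul_ite,
    mul_zero, mul_assoc]

theorem adjMatrix_mulVec_one (hreg : G.IsRegularOfDegree d) :
    G.adjMatrix ℝ *ᵥ 1 = (d : ℝ) • 1 := by
  ext v
  simpa using G.adjMatrix_mulVec_const_apply_of_regular (a := (1 : ℝ)) hreg

theorem one_dotProduct_adjMatrix_mulVec (hreg : G.IsRegularOfDegree d) (x : V → ℝ) :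
    1 ⬝ᵥ G.adjMatrix ℝ *ᵥ x = d * ∑ i, x i := by
  rw [dotProduct_mulVec, ← G.transpose_adjMatrix, vecMul_transpose, adjMatrix_mulVec_one hreg,
    smul_dotProduct, one_dotProduct, smul_eq_mul]

theorem dotProduct_adjMatrix_mulVec_le (hreg : G.IsRegularOfDegree d) (x : V → ℝ) :
    x ⬝ᵥ G.adjMatrix ℝ *ᵥ x ≤ d * (x ⬝ᵥ x) := by
  have hlap := (G.posSemidef_lapMatrix ℝ).dotProduct_mulVec_nonneg x
  have hdeg : x ⬝ᵥ G.degMatrix ℝ *ᵥ x = d * (x ⬝ᵥ x) := by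
    rw [SimpleGraph.dotProduct_mulVec_degMatrix, dotProduct, mul_sum]
    exact sum_congr rfl fun i _ => by rw [hreg i, mul_assoc]
  simp only [star_trivial, SimpleGraph.lapMatrix, sub_mulVec, dotProduct_sub, hdeg] at hlap
  linarith

theorem dotProduct_self_pos {x : V → ℝ} (hx : x ≠ 0) : 0 < x ⬝ᵥ x := by
  simpa using dotProduct_self_star_pos_iff.mpr hx

theorem sum_sq_eq_dotProduct_self (x : V → ℝ) : ∑ i, x i ^ 2 = x ⬝ᵥ x := by
  simp only [dotProduct, sq]

theorem dotProduct_adjMatrix_mulVec_le_normSecondEig (hreg : G.IsRegularOfDegree d) (hd : d ≠ 0)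
    {x : V → ℝ} (hx : ∑ i, x i = 0) :
    x ⬝ᵥ G.adjMatrix ℝ *ᵥ x ≤ d * normSecondEig d G * (x ⬝ᵥ x) := by
  rcases eq_or_ne x 0 with rfl | hx0
  · simp
  have hquot : ∀ y : V → ℝ, y ≠ 0 →
      (∑ i, ∑ j, (if G.Adj i j then (d : ℝ)⁻¹ else 0) * y i * y j) / ∑ i, y i ^ 2
        = (y ⬝ᵥ G.adjMatrix ℝ *ᵥ y) / (d * (y ⬝ᵥ y)) := fun y hy => by
    rw [sum_ite_adj_inv_mul_mul_eq_dotProduct, sum_sq_eq_dotProduct_self]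
    field_simp
  have hbdd : BddAbove {r : ℝ | ∃ y : V → ℝ, y ≠ 0 ∧ (∑ i, y i) = 0 ∧
      r = (∑ i, ∑ j, (if G.Adj i j then (d : ℝ)⁻¹ else 0) * y i * y j) / ∑ i, y i ^ 2} := by
    refine ⟨1, ?_⟩
    rintro r ⟨y, hy, -, rfl⟩
    rw [hquot y hy, div_le_one (by have := dotProduct_self_pos hy; positivity)]
    exact dotProduct_adjMatrix_mulVec_le hreg y
  have hle := le_csSup hbdd ⟨x, hx0, hx, rfl⟩
  rw [hquot x hx0, div_le_iff₀ (by have := dotProduct_self_pos hx0; positivity)] at hle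
  unfold normSecondEig
  rw [if_neg hd]
  linarith

-- The expander mixing lemma, for a single vector.
theorem card_mul_dotProduct_adjMatrix_mulVec_sub_le [Nonempty V] (hreg : G.IsRegularOfDegree d)
    (hd : d ≠ 0) {lam : ℝ} (heig : normSecondEig d G ≤ lam) (u : V → ℝ) :
    Fintype.card V * (u ⬝ᵥ G.adjMatrix ℝ *ᵥ u) - d * (∑ i, u i) ^ 2
      ≤ d * lam * (Fintype.card V * (u ⬝ᵥ u) - (∑ i, u i) ^ 2) := by
  set k : ℝ := (Fintype.card V : ℝ)
  set s : ℝ := ∑ i, u i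
  -- `x` is `k • u` with its projection onto the constant vectors removed.
  set x : V → ℝ := k • u - s • 1
  have hk : 0 < k := by positivity
  have hsum : ∑ i, x i = 0 := by simp [x, sum_sub_distrib, ← mul_sum, s, k]
  have hxAx : x ⬝ᵥ G.adjMatrix ℝ *ᵥ x = k * (k * (u ⬝ᵥ G.adjMatrix ℝ *ᵥ u) - d * s ^ 2) := by
    simp only [x, mulVec_sub, mulVec_smul, adjMatrix_mulVec_one hreg, dotProduct_sub,
      sub_dotProduct, dotProduct_smul, smul_dotProduct, one_dotProduct_adjMatrix_mulVec hreg,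
      dotProduct_one, smul_eq_mul, Pi.sub_apply, Pi.smul_apply, Pi.one_apply,
      sum_sub_distrib, ← mul_sum, mul_one, sum_const, card_univ, nsmul_eq_mul]
    ring
  have hxx : x ⬝ᵥ x = k * (k * (u ⬝ᵥ u) - s ^ 2) := by
    simp only [x, dotProduct_sub, sub_dotProduct, dotProduct_smul, smul_dotProduct,
      one_dotProduct, dotProduct_one, smul_eq_mul, Pi.sub_apply, Pi.smul_apply, Pi.one_apply,
      sum_sub_distrib, ← mul_sum, mul_one, sum_const, card_univ, nsmul_eq_mul]
    ring
  have hxx_nonneg : 0 ≤ k * (u ⬝ᵥ u) - s ^ 2 := by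
    have := dotProduct_star_self_nonneg x
    rw [star_trivial, hxx] at this
    exact nonneg_of_mul_nonneg_right (by linarith) hk
  have hspec := dotProduct_adjMatrix_mulVec_le_normSecondEig hreg hd hsum
  rw [hxAx, hxx] at hspec
  have hlam : d * normSecondEig d G * (k * (k * (u ⬝ᵥ u) - s ^ 2))
      ≤ k * (d * lam * (k * (u ⬝ᵥ u) - s ^ 2)) := by
    rw [mul_left_comm]
    gcongr
  have := le_of_mul_le_mul_left (hspec.trans hlam) hk
  linarith

end Spectral

section Agreement

variable {V : Type*} [Fintype V] {α : Type*} [DecidableEq α]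

theorem card_agree_add_colDist_le {q : ℕ} (X Y : V → Fin q) (σ : Equiv.Perm (Fin q)) :
    #{v | σ (Y v) = X v} + colDist X Y ≤ Fintype.card V := by
  have hdist : colDist X Y ≤ #{v | ¬σ (Y v) = X v} := by
    refine (ciInf_le (OrderBot.bddBelow _) σ).trans_eq ?_
    simp only [hammingDist, Function.comp_apply, ne_comm]
  have := card_filter_add_card_filter_not (s := univ) (fun v => σ (Y v) = X v)
  rw [card_univ] at this
  omega

theorem sum_card_filter_add_eq_card [AddGroup α] [Fintype α] (f g : V → α) :
    ∑ t : α, #{v | f v + t = g v} = Fintype.card V := by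
  rw [← card_univ, card_eq_sum_card_fiberwise (f := fun v => -f v + g v) (t := univ)
    (fun _ _ => mem_univ _)]
  refine sum_congr rfl fun t _ => congrArg card (filter_congr fun v _ => ?_)
  rw [neg_add_eq_iff_eq_add, eq_comm]

theorem card_sub_card_agree_le {q : ℕ} [NeZero q] (X Y : V → Fin q) (σ : Equiv.Perm (Fin q)) :
    (Fintype.card V : ℝ) - #{v | σ (Y v) = X v}
      ≤ ((q : ℝ) - 1) * (Fintype.card V - colDist X Y) := by
  have hshift (t : Fin q) : (#{v | σ (Y v) + t = X v} : ℝ) ≤ Fintype.card V - colDist X Y := by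
    have := card_agree_add_colDist_le X Y (σ.trans (Equiv.addRight t))
    simp only [Equiv.trans_apply, Equiv.coe_addRight] at this
    rw [le_sub_iff_add_le]
    exact_mod_cast this
  have htotal := sum_card_filter_add_eq_card (fun v => σ (Y v)) X
  rw [← add_sum_erase _ _ (mem_univ 0)] at htotal
  simp only [add_zero] at htotal
  have hrest : (∑ t ∈ univ.erase (0 : Fin q), #{v | σ (Y v) + t = X v} : ℝ)
      ≤ ((q : ℝ) - 1) * (Fintype.card V - colDist X Y) := by
    refine (sum_le_sum fun t _ => hshift t).trans_eq ?_
    rw [sum_const, card_erase_of_mem (mem_univ _), card_univ, Fintype.card_fin, nsmul_eq_mul,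
      Nat.cast_pred (NeZero.pos q)]
  have : (#{v | σ (Y v) = X v} : ℝ)
      + ∑ t ∈ univ.erase (0 : Fin q), (#{v | σ (Y v) + t = X v} : ℝ) = Fintype.card V := by
    exact_mod_cast htotal
  linarith

noncomputable def agreeIndicator (X Y : V → α) (σ : Equiv.Perm α) : V → ℝ :=
  fun v => if σ (Y v) = X v then 1 else 0

theorem sum_agreeIndicator (X Y : V → α) (σ : Equiv.Perm α) :
    ∑ v, agreeIndicator X Y σ v = #{v | σ (Y v) = X v} := by
  simp [agreeIndicator, sum_boole]

theorem agreeIndicator_dotProduct_self (X Y : V → α) (σ : Equiv.Perm α) :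
    agreeIndicator X Y σ ⬝ᵥ agreeIndicator X Y σ = #{v | σ (Y v) = X v} := by
  simp only [agreeIndicator, dotProduct, ite_zero_mul_ite_zero, and_self, mul_one, sum_boole]

theorem sum_card_agree [Fintype α] (X Y : V → α) :
    ∑ σ : Equiv.Perm α, #{v | σ (Y v) = X v} = (Fintype.card α - 1)! * Fintype.card V := by
  simp only [card_filter]
  rw [sum_comm]
  simp only [← card_filter, card_perm_apply_eq, sum_const, card_univ, smul_eq_mul, mul_comm]

theorem sum_agreeIndicator_dotProduct_adjMatrix_mulVec {q : ℕ} {G : SimpleGraph V}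
    {X Y : V → Fin q} (hX : IsProperColoring G X) (hY : IsProperColoring G Y) :
    ∑ σ : Equiv.Perm (Fin q), agreeIndicator X Y σ ⬝ᵥ G.adjMatrix ℝ *ᵥ agreeIndicator X Y σ
      = ((q - 2)! : ℝ) * ∑ v, (G.degree v : ℝ) := by
  have hpair (i j : V) (hij : G.Adj i j) :
      ∑ σ : Equiv.Perm (Fin q), agreeIndicator X Y σ i * agreeIndicator X Y σ j
        = ((q - 2)! : ℝ) := by
    simp only [agreeIndicator, ite_zero_mul_ite_zero, one_mul, sum_boole]
    rw [card_perm_apply_eq_and_apply_eq (hY hij) (hX hij), Fintype.card_fin]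
  simp only [SimpleGraph.dotProduct_mulVec_adjMatrix, SimpleGraph.degree_eq_sum_if_adj, mul_sum]
  rw [sum_comm]
  refine sum_congr rfl fun i _ => ?_
  rw [sum_comm]
  refine sum_congr rfl fun j _ => ?_
  split_ifs with hij
  · simp [hpair i j hij]
  · simp

end Agreement

theorem cast_factorial_sub_one_eq {q : ℕ} (hq : 2 ≤ q) :
    ((q - 1)! : ℝ) = ((q : ℝ) - 1) * (q - 2)! := by
  obtain ⟨m, rfl⟩ : ∃ m, q = m + 2 := ⟨q - 2, by omega⟩
  push_cast [Nat.add_sub_cancel, Nat.factorial_succ]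
  ring

theorem cast_factorial_eq {q : ℕ} (hq : 2 ≤ q) : (q ! : ℝ) = q * ((q : ℝ) - 1) * (q - 2)! := by
  rw [mul_assoc, ← cast_factorial_sub_one_eq hq, ← Nat.mul_factorial_pred (by omega : q ≠ 0)]
  push_cast
  ring

section Core

variable {V : Type*} [Fintype V] {q d : ℕ} {G : SimpleGraph V} {X Y : V → Fin q} {δ lam : ℝ}

theorem card_agree_mem_Icc (hq : 2 ≤ q) (hdist : δ * Fintype.card V ≤ colDist X Y)
    (σ : Equiv.Perm (Fin q)) :
    (#{v | σ (Y v) = X v} : ℝ) ∈ Set.Icc ((1 - (q - 1) * (1 - δ)) * Fintype.card V)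
      ((1 - δ) * Fintype.card V) := by
  have : NeZero q := ⟨by omega⟩
  have hq1 : (0 : ℝ) ≤ q - 1 := by
    have : (2 : ℝ) ≤ q := by exact_mod_cast hq
    linarith
  have hupper : (#{v | σ (Y v) = X v} + colDist X Y : ℝ) ≤ Fintype.card V := by
    exact_mod_cast card_agree_add_colDist_le X Y σ
  have hlower := card_sub_card_agree_le X Y σ
  have : ((q : ℝ) - 1) * (Fintype.card V - colDist X Y)
      ≤ ((q : ℝ) - 1) * ((1 - δ) * Fintype.card V) := by
    gcongr
    linarith
  constructor <;> nlinarith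

theorem card_mul_dotProduct_agreeIndicator_le [Nonempty V] (hq : 2 ≤ q)
    (hreg : G.IsRegularOfDegree d) (hd : d ≠ 0) (heig : normSecondEig d G ≤ lam) (hlam : lam ≤ 1)
    (hdist : δ * Fintype.card V ≤ colDist X Y) (σ : Equiv.Perm (Fin q)) :
    Fintype.card V * (agreeIndicator X Y σ ⬝ᵥ G.adjMatrix ℝ *ᵥ agreeIndicator X Y σ)
      ≤ d * (lam * Fintype.card V * #{v | σ (Y v) = X v} + (1 - lam) *
        (((1 - (q - 1) * (1 - δ)) + (1 - δ)) * Fintype.card V * #{v | σ (Y v) = X v}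
          - (1 - (q - 1) * (1 - δ)) * (1 - δ) * (Fintype.card V : ℝ) ^ 2)) := by
  have hmix := card_mul_dotProduct_adjMatrix_mulVec_sub_le hreg hd heig (agreeIndicator X Y σ)
  rw [sum_agreeIndicator, agreeIndicator_dotProduct_self] at hmix
  obtain ⟨hlo, hhi⟩ := card_agree_mem_Icc hq hdist σ
  have hsq : (#{v | σ (Y v) = X v} : ℝ) ^ 2 ≤
      ((1 - (q - 1) * (1 - δ)) + (1 - δ)) * Fintype.card V * #{v | σ (Y v) = X v}
        - (1 - (q - 1) * (1 - δ)) * (1 - δ) * (Fintype.card V : ℝ) ^ 2 := by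
    nlinarith
  have hd_lam : 0 ≤ (d : ℝ) * (1 - lam) := mul_nonneg (Nat.cast_nonneg d) (by linarith)
  nlinarith [mul_le_mul_of_nonneg_left hsq hd_lam]

theorem one_div_sub_one_le_of_le_colDist [Nonempty V] (hq : 2 ≤ q)
    (hreg : G.IsRegularOfDegree d) (hd : d ≠ 0) (heig : normSecondEig d G ≤ lam) (hlam : lam ≤ 1)
    (hX : IsProperColoring G X) (hY : IsProperColoring G Y)
    (hdist : δ * Fintype.card V ≤ colDist X Y) :
    1 / ((q : ℝ) - 1) ≤ lam + (1 - lam) * (((q : ℝ) - 1) * (1 - δ) ^ 2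
      + (1 - ((q : ℝ) - 1) * (1 - δ)) ^ 2) := by
  have hsum := sum_le_sum fun σ (_ : σ ∈ univ) =>
    card_mul_dotProduct_agreeIndicator_le hq hreg hd heig hlam hdist (X := X) (Y := Y) σ
  have hagree : ∑ σ : Equiv.Perm (Fin q), (#{v | σ (Y v) = X v} : ℝ)
      = ((q : ℝ) - 1) * (q - 2)! * Fintype.card V := by
    rw [← cast_factorial_sub_one_eq hq]
    exact_mod_cast (sum_card_agree X Y).trans (by rw [Fintype.card_fin])
  have hdeg : ∑ v, (G.degree v : ℝ) = d * Fintype.card V := by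
    simp [hreg _, mul_comm]
  rw [← mul_sum, sum_agreeIndicator_dotProduct_adjMatrix_mulVec hX hY, hdeg] at hsum
  simp only [mul_add, mul_sub, sum_add_distrib, sum_sub_distrib, ← mul_sum, hagree, sum_const,
    card_univ, Fintype.card_perm, Fintype.card_fin, nsmul_eq_mul] at hsum
  rw [cast_factorial_eq hq] at hsum
  have hq1 : (0 : ℝ) < q - 1 := by
    have : (2 : ℝ) ≤ q := by exact_mod_cast hq
    linarith
  have hP : (0 : ℝ) < d * (Fintype.card V : ℝ) ^ 2 * (q - 2)! := by positivity
  have key : d * (Fintype.card V : ℝ) ^ 2 * (q - 2)! * 1 ≤ d * (Fintype.card V : ℝ) ^ 2 * (q - 2)!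
      * ((lam + (1 - lam) * (((q : ℝ) - 1) * (1 - δ) ^ 2 + (1 - ((q : ℝ) - 1) * (1 - δ)) ^ 2))
        * ((q : ℝ) - 1)) := by
    linear_combination hsum
  rw [div_le_iff₀ hq1]
  exact le_of_mul_le_mul_left key hP

theorem card_le_one_of_isDistinctSet (hq : 2 ≤ q) (hlam : lam ≤ 1)
    (h : (1 - lam) * (((q : ℝ) - 1) * (1 - δ) ^ 2 + (1 - ((q : ℝ) - 1) * (1 - δ)) ^ 2)
      < (1 - lam) - (1 - 1 / ((q : ℝ) - 1)))
    (hreg : G.IsRegularOfDegree d) (heig : normSecondEig d G ≤ lam)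
    {C : Finset (V → Fin q)} (hC : IsDistinctSet G δ C) :
    #C ≤ 1 := by
  by_contra! hC1
  obtain ⟨X, hX, Y, hY, hXY⟩ := one_lt_card.mp hC1
  have : Nonempty V := by
    by_contra hV
    exact hXY (funext fun v => (hV ⟨v⟩).elim)
  have hq1 : 1 / ((q : ℝ) - 1) ≤ 1 := by
    have : (2 : ℝ) ≤ q := by exact_mod_cast hq
    rw [div_le_one (by linarith)]
    linarith
  rcases eq_or_ne d 0 with rfl | hd
  · have hlam1 : lam = 1 := le_antisymm hlam (by simpa [normSecondEig] using heig)
    subst hlam1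
    linarith
  · have := one_div_sub_one_le_of_le_colDist hq hreg hd heig hlam (hC.1 X hX) (hC.1 Y hY)
      (hC.2 X hX Y hY hXY)
    linarith

end Core

theorem colorCount_le_one {q : ℕ} {δ lam : ℝ} (hq : 2 ≤ q) (hlam : lam ≤ 1)
    (h : (1 - lam) * (((q : ℝ) - 1) * (1 - δ) ^ 2 + (1 - ((q : ℝ) - 1) * (1 - δ)) ^ 2)
      < (1 - lam) - (1 - 1 / ((q : ℝ) - 1))) (d n : ℕ) :
    colorCount q δ lam d n ≤ 1 := by
  refine csSup_le' ?_
  rintro m ⟨k, -, G, hreg, heig, C, hC, rfl⟩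
  exact card_le_one_of_isDistinctSet hq hlam h hreg heig hC

theorem one_le_colorCount {q : ℕ} {δ lam : ℝ} (hlam : 0 ≤ lam) (n : ℕ) :
    1 ≤ colorCount q δ lam 1 n := by
  refine le_csSup ⟨(q + 1) ^ n, ?_⟩ ⟨0, n.zero_le, ⊥, fun v => v.elim0, ?_, univ, ⟨?_, ?_⟩, ?_⟩
  · rintro m ⟨k, hk, G, -, -, C, -, rfl⟩
    calc #C ≤ Fintype.card (Fin k → Fin q) := card_le_univ C
      _ = q ^ k := by simp
      _ ≤ (q + 1) ^ n :=
        (Nat.pow_le_pow_left q.le_succ k).trans (Nat.pow_le_pow_right q.succ_pos hk)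
  · rw [normSecondEig, if_neg one_ne_zero]
    exact Real.sSup_le (fun r ⟨x, hx, _⟩ => (hx (funext fun v => v.elim0)).elim) hlam
  · exact fun X _ u => u.elim0
  · exact fun X _ Y _ hXY => (hXY (funext fun v => v.elim0)).elim
  · simp

theorem uniqueRegime_of_colorCount_le_one {q : ℕ} {δ lam : ℝ} (d₀ : ℕ)
    (hle : ∀ d n, colorCount q δ lam d n ≤ 1) (hge : ∀ n, 1 ≤ colorCount q δ lam d₀ n) :
    UniqueRegime q δ lam := by
  refine le_antisymm (iSup_le fun d => ?_) (le_iSup_of_le d₀ ?_)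
  · exact Filter.limsup_le_of_le (by isBoundedDefault)
      (Filter.Eventually.of_forall fun n => by exact_mod_cast hle d n)
  · have hone : (fun n => (colorCount q δ lam d₀ n : ENNReal)) = fun _ => 1 := by
      funext n
      exact_mod_cast le_antisymm (hle d₀ n) (hge n)
    rw [hone, Filter.limsup_const]

theorem strong_uniqueRegime_general (q : ℕ) (hq : 3 ≤ q) (δ lam : ℝ)
    (hlam1 : 0 < lam) (hlam2 : lam ≤ 1)
    (h : (1 - lam) * (((q : ℝ) - 1) * (1 - δ) ^ 2 + (1 - ((q : ℝ) - 1) * (1 - δ)) ^ 2)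
      < (1 - lam) - (1 - 1 / ((q : ℝ) - 1))) :
    UniqueRegime q δ lam :=
  uniqueRegime_of_colorCount_le_one 1 (colorCount_le_one (by omega) hlam2 h)
    (one_le_colorCount hlam1.le)

/-- Any `(δ, lam) ∈ [1 - 1/(q-1), 1 - 1/q] × (0, 1]` satisfying
`(q-1)(1-δ)² + (1 - (q-1)(1-δ))² < 1 - (1 - 1/(q-1))/(1 - lam)` is in the unique
regime.  (The inequality is stated multiplied through by `1 - lam ≥ 0`, which is
equivalent on the domain `lam ∈ (0, 1]`.) -/
theorem strong_uniqueRegime (q : ℕ) (hq : 3 ≤ q) (δ lam : ℝ)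
    (hδ1 : 1 - 1 / ((q : ℝ) - 1) ≤ δ) (hδ2 : δ ≤ 1 - 1 / (q : ℝ))
    (hlam1 : 0 < lam) (hlam2 : lam ≤ 1)
    (h : (1 - lam) * (((q : ℝ) - 1) * (1 - δ) ^ 2 + (1 - ((q : ℝ) - 1) * (1 - δ)) ^ 2)
      < (1 - lam) - (1 - 1 / ((q : ℝ) - 1))) :
    UniqueRegime q δ lam :=
  strong_uniqueRegime_general q hq δ lam hlam1 hlam2 h
end
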